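/- arXiv:1304.5942 — 5 statements merged into one kernel-verified Lean document; each statement's English description precedes it below -/
import Mathlib

section
/- Let d and n be natural numbers with 2 ≤ d ≤ n and let h = ⌈log_d n⌉. Consider the star graph on vertices {0, 1, …, n−1} whose edges are {0, i} for i = 1, …, n−1. Then the minimum, over all injective maps φ: {0,…,n−1} → {1,…,d^h}, of Σ_{i=1}^{n−1} δ_{d,h}(φ(0), φ(i)) equals 2·(h·n − (d^h − 1)/(d−1)); that is, this value is attained by some injective φ and no injective φ gives a smaller value. (Here (d^h − 1)/(d−1) is an exact integer division, since d−1 divides d^h − 1.) -/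
/-- The canonical leaf distance on the complete `d`-regular tree of height `h`:
`δ_{d,h}(t,j) = 2·min{k ∈ {1,…,h} : ⌊(t−1)/d^k⌋ = ⌊(j−1)/d^k⌋}` for `t ≠ j`,
and `δ_{d,h}(t,t) = 0`. -/
noncomputable def leafDist (d h t j : ℕ) : ℕ :=
  if t = j then 0
  else 2 * sInf {k : ℕ | 1 ≤ k ∧ k ≤ h ∧ (t - 1) / d ^ k = (j - 1) / d ^ k}

/-!
The half-distance from a leaf `t` to a leaf `j` is the number of levels `k < h` at which `t` and
`j` lie in different subtrees of height `k`. Summing over the leaves and exchanging the sums, the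
objective of a star centred at `t` is twice the sum over `k < h` of the number of leaves outside
the height-`k` subtree containing `t`. That subtree has only `d ^ k` leaves, so the `k`-th term is
at least `n - d ^ k`, and the arrangement `i ↦ i + 1` attains this at every level. Finally
`∑ k < h, (n - d ^ k) = h n - (d ^ h - 1) / (d - 1)`, because `d ^ k ≤ n` for `k < h`.
-/

open Finset

/-- Leaves are numbered from `1`; subtrees of height `k` are numbered from `0`. -/
def subtreeIndex (d k t : ℕ) : ℕ :=
  (t - 1) / d ^ k

theorem subtreeIndex_eq_of_le {d k k' t j : ℕ} (hk : k ≤ k')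
    (h : subtreeIndex d k t = subtreeIndex d k j) : subtreeIndex d k' t = subtreeIndex d k' j := by
  obtain ⟨m, rfl⟩ := Nat.exists_eq_add_of_le hk
  simp only [subtreeIndex, pow_add, ← Nat.div_div_eq_div_mul] at h ⊢
  rw [h]

theorem subtreeIndex_eq_zero {d h t : ℕ} (ht : t ≤ d ^ h) : subtreeIndex d h t = 0 :=
  Nat.div_eq_zero_iff.mpr (by omega)

theorem leafDist_eq_two_mul_card {d h t j : ℕ} (ht : 1 ≤ t) (hj : 1 ≤ j)
    (ht' : t ≤ d ^ h) (hj' : j ≤ d ^ h) :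
    leafDist d h t j = 2 * #{k ∈ range h | subtreeIndex d k t ≠ subtreeIndex d k j} := by
  by_cases htj : t = j
  · simp [leafDist, htj]
  set S := {k : ℕ | 1 ≤ k ∧ k ≤ h ∧ (t - 1) / d ^ k = (j - 1) / d ^ k}
  have hh : h ≠ 0 := by
    rintro rfl
    simp only [pow_zero] at ht' hj'
    omega
  have hS : S.Nonempty :=
    ⟨h, Nat.one_le_iff_ne_zero.mpr hh, le_rfl,
      (subtreeIndex_eq_zero ht').trans (subtreeIndex_eq_zero hj').symm⟩
  obtain ⟨-, hle, hagree⟩ := Nat.sInf_mem hS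
  suffices {k ∈ range h | subtreeIndex d k t ≠ subtreeIndex d k j} = range (sInf S) by
    simp only [leafDist, if_neg htj, this, card_range, S]
  ext k
  simp only [mem_filter, mem_range]
  constructor
  · rintro ⟨-, hne⟩
    by_contra! hk
    exact hne (subtreeIndex_eq_of_le hk hagree)
  · intro hk
    refine ⟨by omega, fun heq => ?_⟩
    rcases Nat.eq_zero_or_pos k with rfl | hk0
    · simp only [subtreeIndex, pow_zero, Nat.div_one] at heq
      omega
    · exact absurd (Nat.sInf_le (s := S) ⟨hk0, by omega, heq⟩) (by omega)

theorem sum_leafDist_eq {ι : Type*} {s : Finset ι} {f : ι → ℕ} {d h t : ℕ} (ht : 1 ≤ t)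
    (ht' : t ≤ d ^ h) (hf : ∀ i ∈ s, 1 ≤ f i ∧ f i ≤ d ^ h) :
    ∑ i ∈ s, leafDist d h t (f i) =
      2 * ∑ k ∈ range h, #{i ∈ s | subtreeIndex d k t ≠ subtreeIndex d k (f i)} := by
  rw [sum_congr rfl fun i hi => leafDist_eq_two_mul_card ht (hf i hi).1 ht' (hf i hi).2,
    ← mul_sum]
  simp only [card_filter]
  rw [sum_comm]

theorem card_filter_div_eq_le {ι : Type*} {s : Finset ι} {f : ι → ℕ} {m : ℕ} (hm : 0 < m)
    (hf : Set.InjOn f s) (q : ℕ) : #{i ∈ s | f i / m = q} ≤ m := by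
  have hmaps :
      Set.MapsTo f (({i ∈ s | f i / m = q} : Finset ι) : Set ι) (Ico (q * m) (q * m + m)) := by
    intro i hi
    have := (Nat.div_eq_iff hm).mp (mem_filter.mp hi).2
    simp only [coe_Ico, Set.mem_Ico]
    omega
  simpa using card_le_card_of_injOn f hmaps (hf.mono (coe_subset.mpr (filter_subset _ _)))

theorem sub_pow_le_card_filter_subtreeIndex_ne {ι : Type*} {s : Finset ι} {f : ι → ℕ}
    {d : ℕ} (hd : 0 < d) (hf : Set.InjOn f s) (hf1 : ∀ i ∈ s, 1 ≤ f i) (k t : ℕ) :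
    #s - d ^ k ≤ #{i ∈ s | subtreeIndex d k t ≠ subtreeIndex d k (f i)} := by
  have hinj : Set.InjOn (fun i => f i - 1) s := fun i hi j hj hij =>
    hf hi hj (by have := hf1 i hi; have := hf1 j hj; simp only at hij; omega)
  have hsame : #{i ∈ s | subtreeIndex d k t = subtreeIndex d k (f i)} ≤ d ^ k := by
    convert card_filter_div_eq_le (pow_pos hd k) hinj (subtreeIndex d k t) using 3
    exact eq_comm
  have hsplit := card_filter_add_card_filter_not (s := s)
    (fun i => subtreeIndex d k t = subtreeIndex d k (f i))
  simp only [ne_eq]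
  omega

theorem card_filter_subtreeIndex_one_ne {d : ℕ} (hd : 0 < d) (k n : ℕ) :
    #{i ∈ range n | subtreeIndex d k 1 ≠ subtreeIndex d k (i + 1)} = n - d ^ k := by
  have : {i ∈ range n | subtreeIndex d k 1 ≠ subtreeIndex d k (i + 1)} = Ico (d ^ k) n := by
    ext i
    simp [subtreeIndex, Nat.div_eq_zero_iff, hd.ne', eq_comm (a := 0), and_comm]
  rw [this, Nat.card_Ico]

theorem sum_range_sub_pow {d n h : ℕ} (hd : 2 ≤ d) (hpow : ∀ k < h, d ^ k ≤ n) :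
    ∑ k ∈ range h, (n - d ^ k) = h * n - (d ^ h - 1) / (d - 1) := by
  rw [sum_tsub_distrib _ fun k hk => hpow k (mem_range.mp hk), Nat.geomSum_eq hd, sum_const,
    card_range, smul_eq_mul]

/-- Lemma 2, the star lemma: for `2 ≤ d ≤ n` and `h = ⌈log_d n⌉`
(the least `h` with `n ≤ d^h`), the minimum over all injective maps
`φ : {0,…,n−1} → {1,…,d^h}` of `Σ_{i=1}^{n−1} δ_{d,h}(φ(0), φ(i))` equals
`2·(h·n − (d^h − 1)/(d−1))`: this value is attained by some injective `φ` and no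
injective `φ` gives a smaller value. -/
theorem star_optimal_value (d n h : ℕ) (hd : 2 ≤ d) (hdn : d ≤ n)
    (hh : IsLeast {k : ℕ | n ≤ d ^ k} h) :
    IsLeast
      {s : ℕ | ∃ φ : ℕ → ℕ, Set.InjOn φ (Set.Iio n) ∧
        (∀ i < n, 1 ≤ φ i ∧ φ i ≤ d ^ h) ∧
        s = ∑ i ∈ Finset.Ico 1 n, leafDist d h (φ 0) (φ i)}
      (2 * (h * n - (d ^ h - 1) / (d - 1))) := by
  obtain ⟨hn_le : n ≤ d ^ h, hh_min⟩ := hh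
  have hn : 0 < n := by omega
  have hd0 : 0 < d := by omega
  have hpow : ∀ k < h, d ^ k ≤ n := fun k hk =>
    (not_le.mp fun hle => (hh_min hle).not_gt hk).le
  have hcenter (φ : ℕ → ℕ) : ∑ i ∈ Ico 1 n, leafDist d h (φ 0) (φ i) =
      ∑ i ∈ range n, leafDist d h (φ 0) (φ i) := by
    simp [sum_range_eq_add_Ico _ hn, leafDist]
  rw [← sum_range_sub_pow hd hpow]
  constructor
  · refine ⟨(· + 1), fun a _ b _ hab => by simpa using hab,
      fun i hi => ⟨i.succ_pos, hi.trans_le hn_le⟩, ?_⟩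
    rw [hcenter (· + 1), sum_leafDist_eq le_rfl (hn.trans_le hn_le)
      fun i hi => ⟨i.succ_pos, (mem_range.mp hi).trans_le hn_le⟩]
    simp only [card_filter_subtreeIndex_one_ne hd0]
  · rintro _ ⟨φ, hφ, hbd, rfl⟩
    rw [hcenter, sum_leafDist_eq (hbd 0 hn).1 (hbd 0 hn).2 fun i hi => hbd i (mem_range.mp hi)]
    gcongr with k
    simpa using sub_pow_le_card_filter_subtreeIndex_ne hd0 (by rwa [coe_range])
      (fun i hi => (hbd i (mem_range.mp hi)).1) k (φ 0)
end

section
/- Let G be a finite simple graph on n ≥ 2 vertices, let d be a natural number with 2 ≤ d ≤ n, and let h = ⌈log_d n⌉. For each vertex v let deg(v) denote its degree in G and set p(v) = ⌈log_d(deg(v)+1)⌉. Then for every arrangement φ (injective map from the vertex set of G into {1,…,d^h}), OV(G,d,φ) ≥ Σ_{v ∈ V(G)} ( p(v)·(deg(v)+1) − (d^{p(v)} − 1)/(d−1) ), where each (d^{p(v)} − 1)/(d−1) is an exact integer division. -/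
lemma leafDist_comm (d h t j : ℕ) : leafDist d h t j = leafDist d h j t := by
  unfold leafDist
  rcases eq_or_ne t j with h' | h'
  · simp [h']
  · rw [if_neg h', if_neg (Ne.symm h')]
    have hset : {k : ℕ | 1 ≤ k ∧ k ≤ h ∧ (t - 1) / d ^ k = (j - 1) / d ^ k}
        = {k : ℕ | 1 ≤ k ∧ k ≤ h ∧ (j - 1) / d ^ k = (t - 1) / d ^ k} := by
      ext k
      exact and_congr_right fun _ => and_congr_right fun _ => eq_comm
    rw [hset]

/-- The objective value of an arrangement `φ` of the guest graph `G` on the leaves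
of the complete `d`-regular tree of height `h`:
`OV(G,d,φ) = Σ_{{u,v} ∈ E(G)} δ_{d,h}(φ(u), φ(v))`. -/
noncomputable def OV {V : Type*} [Fintype V] [DecidableEq V] (G : SimpleGraph V)
    [DecidableRel G.Adj] (d h : ℕ) (φ : V → ℕ) : ℕ :=
  ∑ e ∈ G.edgeFinset,
    Sym2.lift ⟨fun u v => leafDist d h (φ u) (φ v),
      fun u v => leafDist_comm d h (φ u) (φ v)⟩ e

/-!
Write `ℓ(t, j)` for the height of the lowest common ancestor of the leaves `t ≠ j`, so that
`δ(t, j) = 2ℓ(t, j)`. Leaves with `ℓ(t, j) ≤ k` lie in the same block of `d^k` consecutive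
leaves, so at most `d^k - 1` neighbours `u` of a vertex `v` have `ℓ(φ v, φ u) ≤ k`, i.e. at
least `deg v + 1 - d^k` of them have `ℓ(φ v, φ u) > k`. Summing over `k < p(v)` (layer-cake
counting) gives `∑_u ℓ(φ v, φ u) ≥ p(v)(deg v + 1) - ∑_{k < p(v)} d^k`, and summing over all
vertices counts every edge once from each end, i.e. it adds up to `OV`.
-/

open Finset

namespace Finset

variable {α : Type*}

theorem sum_range_card_filter_lt_le_sum (s : Finset α) (f : α → ℕ) (p : ℕ) :
    ∑ k ∈ range p, #{a ∈ s | k < f a} ≤ ∑ a ∈ s, f a := by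
  simp only [card_filter]
  rw [sum_comm]
  refine sum_le_sum fun a _ => ?_
  rw [← card_filter]
  calc #{k ∈ range p | k < f a} ≤ #(range (f a)) :=
        card_le_card fun k hk => mem_range.2 (mem_filter.1 hk).2
    _ = f a := card_range _

theorem mul_card_add_one_le_sum_add_sum (s : Finset α) (f : α → ℕ) (g : ℕ → ℕ) (p : ℕ)
    (hg : ∀ k < p, #{a ∈ s | f a ≤ k} + 1 ≤ g k) :
    p * (#s + 1) ≤ ∑ a ∈ s, f a + ∑ k ∈ range p, g k := by
  have hsplit (k : ℕ) (hk : k < p) : #s + 1 ≤ #{a ∈ s | k < f a} + g k := by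
    have := card_filter_add_card_filter_not (s := s) (fun a => f a ≤ k)
    simp only [not_le] at this
    linarith [hg k hk]
  calc p * (#s + 1) = ∑ _k ∈ range p, (#s + 1) := by simp
    _ ≤ ∑ k ∈ range p, (#{a ∈ s | k < f a} + g k) := sum_le_sum fun k hk => hsplit k (mem_range.1 hk)
    _ = ∑ k ∈ range p, #{a ∈ s | k < f a} + ∑ k ∈ range p, g k := sum_add_distrib
    _ ≤ ∑ a ∈ s, f a + ∑ k ∈ range p, g k := by
        gcongr
        exact sum_range_card_filter_lt_le_sum s f p

theorem card_le_of_forall_div_eq {s : Finset ℕ} {m c : ℕ} (hm : 0 < m)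
    (hs : ∀ x ∈ s, x / m = c) : #s ≤ m := by
  calc #s ≤ #(Ico (c * m) (c * m + m)) := by
        refine card_le_card fun x hx => ?_
        obtain rfl := hs x hx
        have := Nat.lt_div_mul_add (a := x) hm
        exact mem_Ico.2 ⟨Nat.div_mul_le_self x m, by linarith⟩
    _ = m := by simp

end Finset

theorem SimpleGraph.sum_edgeFinset_lift_add_swap {V M : Type*} [Fintype V] [DecidableEq V]
    [AddCommMonoid M] (G : SimpleGraph V) [DecidableRel G.Adj] (F : V → V → M) :
    ∑ e ∈ G.edgeFinset, Sym2.lift ⟨fun a b => F a b + F b a, fun _ _ => add_comm _ _⟩ e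
      = ∑ v, ∑ u ∈ G.neighborFinset v, F v u := by
  set darts : Finset (V × V) := {p | G.Adj p.1 p.2}
  have hdarts : ∑ p ∈ darts, F p.1 p.2 = ∑ v, ∑ u ∈ G.neighborFinset v, F v u := by
    rw [sum_filter, ← univ_product_univ, sum_product]
    simp only [SimpleGraph.neighborFinset_eq_filter, sum_filter]
  have hmaps : ∀ p ∈ darts, s(p.1, p.2) ∈ G.edgeFinset := fun p hp => by
    simpa [darts] using hp
  rw [← hdarts, ← sum_fiberwise_of_maps_to hmaps]
  refine sum_congr rfl fun e he => ?_
  induction e using Sym2.ind with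
  | _ a b =>
    have hab : G.Adj a b := by simpa using he
    have hfiber : {p ∈ darts | s(p.1, p.2) = s(a, b)} = {(a, b), (b, a)} := by
      ext ⟨x, y⟩
      simp only [darts, mem_filter, mem_univ, true_and, mem_insert, mem_singleton,
        Prod.mk.injEq, Sym2.eq_iff]
      constructor
      · rintro ⟨-, h⟩
        exact h
      · rintro (⟨rfl, rfl⟩ | ⟨rfl, rfl⟩)
        exacts [⟨hab, Or.inl ⟨rfl, rfl⟩⟩, ⟨hab.symm, Or.inr ⟨rfl, rfl⟩⟩]
    have hne : ((a, b) : V × V) ≠ (b, a) := fun h => hab.ne (congrArg Prod.fst h)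
    rw [Sym2.lift_mk, hfiber, sum_pair hne]

noncomputable def lcaLevel (d h t j : ℕ) : ℕ :=
  sInf {k : ℕ | 1 ≤ k ∧ k ≤ h ∧ (t - 1) / d ^ k = (j - 1) / d ^ k}

theorem lcaLevel_comm (d h t j : ℕ) : lcaLevel d h t j = lcaLevel d h j t := by
  simp only [lcaLevel, eq_comm]

theorem leafDist_eq_lcaLevel_add_lcaLevel {d h t j : ℕ} (hne : t ≠ j) :
    leafDist d h t j = lcaLevel d h t j + lcaLevel d h j t := by
  rw [leafDist, if_neg hne, lcaLevel_comm d h j t, two_mul, lcaLevel]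

theorem div_pow_eq_div_pow_of_le {x y d a b : ℕ} (hab : a ≤ b)
    (hxy : x / d ^ a = y / d ^ a) : x / d ^ b = y / d ^ b := by
  obtain ⟨c, rfl⟩ := Nat.exists_eq_add_of_le hab
  rw [pow_add, ← Nat.div_div_eq_div_mul, ← Nat.div_div_eq_div_mul, hxy]

theorem div_pow_eq_div_pow_of_lcaLevel_le {d h t j k : ℕ} (ht : t - 1 < d ^ h)
    (hj : j - 1 < d ^ h) (hk : lcaLevel d h t j ≤ k) : (t - 1) / d ^ k = (j - 1) / d ^ k := by
  rcases Nat.eq_zero_or_pos h with rfl | hh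
  · rw [pow_zero] at ht hj
    rw [Nat.lt_one_iff.1 ht, Nat.lt_one_iff.1 hj]
  have hroot : h ∈ {k : ℕ | 1 ≤ k ∧ k ≤ h ∧ (t - 1) / d ^ k = (j - 1) / d ^ k} :=
    ⟨hh, le_rfl, by rw [Nat.div_eq_of_lt ht, Nat.div_eq_of_lt hj]⟩
  exact div_pow_eq_div_pow_of_le hk (Nat.sInf_mem ⟨h, hroot⟩).2.2

section Arrangement

variable {V : Type*} [Fintype V] [DecidableEq V] (G : SimpleGraph V) [DecidableRel G.Adj]
  {d h : ℕ} {φ : V → ℕ}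

theorem OV_eq_sum_sum_lcaLevel (hinj : Function.Injective φ) :
    OV G d h φ = ∑ v, ∑ u ∈ G.neighborFinset v, lcaLevel d h (φ v) (φ u) := by
  rw [OV, ← G.sum_edgeFinset_lift_add_swap]
  refine sum_congr rfl fun e he => ?_
  induction e using Sym2.ind with
  | _ a b =>
    have hab : G.Adj a b := by simpa using he
    exact leafDist_eq_lcaLevel_add_lcaLevel (hinj.ne hab.ne)

theorem card_filter_lcaLevel_le_add_one_le (hd : 0 < d) (hinj : Function.Injective φ)
    (hrange : ∀ v, 1 ≤ φ v ∧ φ v ≤ d ^ h) (v : V) (k : ℕ) :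
    #{u ∈ G.neighborFinset v | lcaLevel d h (φ v) (φ u) ≤ k} + 1 ≤ d ^ k := by
  set near := {u ∈ G.neighborFinset v | lcaLevel d h (φ v) (φ u) ≤ k}
  have hleaf : Function.Injective fun u => φ u - 1 := fun a b hab => by
    have := hrange a; have := hrange b
    exact hinj (by simp only at hab; omega)
  have hv : v ∉ near := by simp [near]
  rw [← card_insert_of_notMem hv, ← card_image_of_injective _ hleaf]
  refine card_le_of_forall_div_eq (c := (φ v - 1) / d ^ k) (pow_pos hd k) ?_
  simp only [mem_image, mem_insert, forall_exists_index, and_imp]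
  rintro _ u (rfl | hu) rfl
  · rfl
  · have := hrange u; have := hrange v
    exact (div_pow_eq_div_pow_of_lcaLevel_le (by omega) (by omega) (mem_filter.1 hu).2).symm

theorem clog_mul_sub_le_sum_lcaLevel (hd : 2 ≤ d) (hinj : Function.Injective φ)
    (hrange : ∀ v, 1 ≤ φ v ∧ φ v ≤ d ^ h) (v : V) :
    Nat.clog d (G.degree v + 1) * (G.degree v + 1)
        - (d ^ Nat.clog d (G.degree v + 1) - 1) / (d - 1)
      ≤ ∑ u ∈ G.neighborFinset v, lcaLevel d h (φ v) (φ u) := by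
  rw [← Nat.geomSum_eq hd, tsub_le_iff_right, ← G.card_neighborFinset_eq_degree]
  exact mul_card_add_one_le_sum_add_sum _ _ _ _
    fun k _ => card_filter_lcaLevel_le_add_one_le G (by omega) hinj hrange v k

end Arrangement

theorem degree_bound_general
    {V : Type*} [Fintype V] [DecidableEq V] (G : SimpleGraph V) [DecidableRel G.Adj]
    (d h : ℕ) (hd : 2 ≤ d)
    (φ : V → ℕ) (hinj : Function.Injective φ)
    (hrange : ∀ v, 1 ≤ φ v ∧ φ v ≤ d ^ h) :
    ∑ v : V, (Nat.clog d (G.degree v + 1) * (G.degree v + 1)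
        - (d ^ Nat.clog d (G.degree v + 1) - 1) / (d - 1))
      ≤ OV G d h φ := by
  rw [OV_eq_sum_sum_lcaLevel G hinj]
  exact sum_le_sum fun v _ => clog_mul_sub_le_sum_lcaLevel G hd hinj hrange v

/-- Theorem 3, the degree bound: for a finite simple graph `G` on
`n ≥ 2` vertices, `2 ≤ d ≤ n`, `h = ⌈log_d n⌉` (the least `h` with `n ≤ d^h`),
and `p(v) = ⌈log_d (deg v + 1)⌉ = Nat.clog d (deg v + 1)`, every injective
arrangement `φ : V(G) → {1,…,d^h}` satisfies
`OV(G,d,φ) ≥ Σ_v (p(v)(deg v + 1) − (d^{p(v)} − 1)/(d−1))`. -/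
theorem degree_bound
    {V : Type*} [Fintype V] [DecidableEq V] (G : SimpleGraph V) [DecidableRel G.Adj]
    (n d h : ℕ) (hn : Fintype.card V = n) (hn2 : 2 ≤ n) (hd : 2 ≤ d) (hdn : d ≤ n)
    (hh : IsLeast {k : ℕ | n ≤ d ^ k} h)
    (φ : V → ℕ) (hinj : Function.Injective φ)
    (hrange : ∀ v, 1 ≤ φ v ∧ φ v ≤ d ^ h) :
    ∑ v : V, (Nat.clog d (G.degree v + 1) * (G.degree v + 1)
        - (d ^ Nat.clog d (G.degree v + 1) - 1) / (d - 1))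
      ≤ OV G d h φ :=
  degree_bound_general G d h hd φ hinj hrange
end

section
/- Let d ≥ 2 and h ≥ 1 be natural numbers and let e, g, l, r be natural numbers with 0 ≤ e < h, 1 ≤ g ≤ d^e, and 1 ≤ l < r ≤ d. Let Δ = (g−1)·d^{h−e} and define f: {1,…,d^h} → {1,…,d^h} by: f(i) = Δ + (r−1)·d^{h−(e+1)} + t if i = Δ + (l−1)·d^{h−(e+1)} + t for some 1 ≤ t ≤ d^{h−(e+1)}; f(i) = Δ + (l−1)·d^{h−(e+1)} + t if i = Δ + (r−1)·d^{h−(e+1)} + t for some 1 ≤ t ≤ d^{h−(e+1)}; and f(i) = i otherwise. Then f is a bijection of {1,…,d^h} and δ_{d,h}(f(i), f(j)) = δ_{d,h}(i, j) for all i, j ∈ {1,…,d^h}. -/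
/-- the flip `f` with parameters `(e,g,l,r)` — interchanging the
leaves of the `l`-th and `r`-th subtrees of height `h−(e+1)` hanging on the
`g`-th node of level `e`, where `Δ = (g−1)·d^(h−e)`, via
`f(Δ + (l−1)·d^(h−(e+1)) + t) = Δ + (r−1)·d^(h−(e+1)) + t`,
`f(Δ + (r−1)·d^(h−(e+1)) + t) = Δ + (l−1)·d^(h−(e+1)) + t` for `1 ≤ t ≤ d^(h−(e+1))`,
and `f(i) = i` otherwise — is a bijection of `{1,…,d^h}` that preserves the
canonical leaf distance. -/
theorem flip_bijective_and_preserves_leafDist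
    (d h e g l r : ℕ) (hd : 2 ≤ d) (he : e < h)
    (hg1 : 1 ≤ g) (hg2 : g ≤ d ^ e) (hl : 1 ≤ l) (hlr : l < r) (hr : r ≤ d)
    (f : ℕ → ℕ)
    (hfl : ∀ t, 1 ≤ t → t ≤ d ^ (h - (e + 1)) →
      f ((g - 1) * d ^ (h - e) + (l - 1) * d ^ (h - (e + 1)) + t)
        = (g - 1) * d ^ (h - e) + (r - 1) * d ^ (h - (e + 1)) + t)
    (hfr : ∀ t, 1 ≤ t → t ≤ d ^ (h - (e + 1)) →
      f ((g - 1) * d ^ (h - e) + (r - 1) * d ^ (h - (e + 1)) + t)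
        = (g - 1) * d ^ (h - e) + (l - 1) * d ^ (h - (e + 1)) + t)
    (hfid : ∀ i, 1 ≤ i → i ≤ d ^ h →
      (¬ ∃ t, 1 ≤ t ∧ t ≤ d ^ (h - (e + 1)) ∧
        (i = (g - 1) * d ^ (h - e) + (l - 1) * d ^ (h - (e + 1)) + t ∨
         i = (g - 1) * d ^ (h - e) + (r - 1) * d ^ (h - (e + 1)) + t)) →
      f i = i) :
    Set.BijOn f (Set.Icc 1 (d ^ h)) (Set.Icc 1 (d ^ h)) ∧
      ∀ i ∈ Set.Icc 1 (d ^ h), ∀ j ∈ Set.Icc 1 (d ^ h),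
        leafDist d h (f i) (f j) = leafDist d h i j := by
  have hd0 : 0 < d := by omega
  set p := h - (e + 1) with hp
  set m := d ^ p with hm'
  have hm : 0 < m := pow_pos hd0 p
  set A := (g - 1) * d + (l - 1) with hA'
  set B := (g - 1) * d + (r - 1) with hB'
  have hpe : h - e = p + 1 := by omega
  have hde : d ^ (h - e) = m * d := by rw [hpe, pow_succ, hm']
  have hΔl : (g - 1) * d ^ (h - e) + (l - 1) * m = A * m := by
    rw [hde, hA']; ring
  have hΔr : (g - 1) * d ^ (h - e) + (r - 1) * m = B * m := by
    rw [hde, hB']; ring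
  have hBAm : B * m = A * m + (r - l) * m := by
    have hB2 : B = A + (r - l) := by rw [hA', hB']; omega
    rw [hB2, add_mul]
  have hepm : d ^ h = d ^ (e + 1) * m := by
    rw [hm', ← pow_add]; congr 1; omega
  have hgd : B + 1 ≤ d ^ (e + 1) := by
    have h1 : 1 ≤ d ^ e := Nat.one_le_pow _ _ hd0
    have h2 : (g - 1) * d + r ≤ (d ^ e - 1) * d + d :=
      add_le_add (Nat.mul_le_mul_right d (by omega)) hr
    have h3 : d ^ (e + 1) = d ^ e * d := pow_succ d e
    have h4 : (d ^ e - 1) * d = d ^ e * d - d := by rw [Nat.sub_one_mul]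
    have h5 : d ≤ d ^ e * d := Nat.le_mul_of_pos_left d (by omega)
    omega
  -- block membership characterization
  have hmem : ∀ C x : ℕ, 1 ≤ x →
      ((x - 1) / m = C ↔ ∃ t, 1 ≤ t ∧ t ≤ m ∧ x = C * m + t) := by
    intro C x hx
    constructor
    · intro hq
      have h1 : C * m ≤ x - 1 := by
        conv_lhs => rw [← hq]
        exact Nat.div_mul_le_self _ _
      have h2 : x - 1 < (C + 1) * m :=
        (Nat.div_lt_iff_lt_mul hm).mp (by rw [hq]; exact Nat.lt_succ_self C)
      have h3 : (C + 1) * m = C * m + m := by ring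
      exact ⟨x - C * m, by omega, by omega, by omega⟩
    · rintro ⟨t, ht1, ht2, rfl⟩
      have h1 : C * m + t - 1 = (t - 1) + C * m := by omega
      rw [h1, Nat.add_mul_div_right _ _ hm, Nat.div_eq_of_lt (by omega)]
      omega
  -- behavior of f on the left block
  have hfL : ∀ x, 1 ≤ x → (x - 1) / m = A →
      ∃ t, 1 ≤ t ∧ t ≤ m ∧ x = A * m + t ∧ f x = B * m + t := by
    intro x hx hxA
    obtain ⟨t, ht1, ht2, rfl⟩ := (hmem A x hx).mp hxA
    refine ⟨t, ht1, ht2, rfl, ?_⟩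
    have e1 : A * m + t = (g - 1) * d ^ (h - e) + (l - 1) * m + t := by omega
    rw [e1, hfl t ht1 ht2, hΔr]
  -- behavior of f on the right block
  have hfR : ∀ x, 1 ≤ x → (x - 1) / m = B →
      ∃ t, 1 ≤ t ∧ t ≤ m ∧ x = B * m + t ∧ f x = A * m + t := by
    intro x hx hxB
    obtain ⟨t, ht1, ht2, rfl⟩ := (hmem B x hx).mp hxB
    refine ⟨t, ht1, ht2, rfl, ?_⟩
    have e1 : B * m + t = (g - 1) * d ^ (h - e) + (r - 1) * m + t := by omega
    rw [e1, hfr t ht1 ht2, hΔl]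
  -- behavior of f outside the blocks
  have hfI : ∀ x, 1 ≤ x → x ≤ d ^ h → (x - 1) / m ≠ A → (x - 1) / m ≠ B →
      f x = x := by
    intro x hx1 hx2 hnA hnB
    apply hfid x hx1 hx2
    rintro ⟨t, ht1, ht2, hc | hc⟩
    · exact hnA ((hmem A x hx1).mpr ⟨t, ht1, ht2, by omega⟩)
    · exact hnB ((hmem B x hx1).mpr ⟨t, ht1, ht2, by omega⟩)
  -- lifting quotient equalities from level k ≤ p to level p
  have hdivlift : ∀ u v k, k ≤ p → u / d ^ k = v / d ^ k → u / m = v / m := by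
    intro u v k hk hq
    have h1 : m = d ^ k * d ^ (p - k) := by rw [hm', ← pow_add]; congr 1; omega
    rw [h1, ← Nat.div_div_eq_div_mul, ← Nat.div_div_eq_div_mul, hq]
  -- shifting by (r-l)*m at level k ≤ p
  have hshift : ∀ u k, k ≤ p →
      (u + (r - l) * m) / d ^ k = u / d ^ k + (r - l) * d ^ (p - k) := by
    intro u k hk
    have h1 : (d : ℕ) ^ p = d ^ (p - k) * d ^ k := by rw [← pow_add]; congr 1; omega
    have h2 : (r - l) * m = ((r - l) * d ^ (p - k)) * d ^ k := by
      rw [hm', h1, mul_assoc]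
    rw [h2, Nat.add_mul_div_right _ _ (pow_pos hd0 k)]
  -- quotient of block elements at level p+1
  have hqd : ∀ c u : ℕ, c < d → u < m →
      (((g - 1) * d + c) * m + u) / d ^ (p + 1) = g - 1 := by
    intro c u hc hu
    have h0 : d ^ (p + 1) = m * d := by rw [hm', pow_succ]
    have h2 : ((g - 1) * d + c) * m + u = (c * m + u) + (g - 1) * (m * d) := by ring
    have hlt : c * m + u < m * d := by
      have h3 : (c + 1) * m = c * m + m := by ring
      have h4 : (c + 1) * m ≤ d * m := Nat.mul_le_mul_right m (by omega)
      have h5 : d * m = m * d := mul_comm _ _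
      omega
    rw [h0, h2, Nat.add_mul_div_right _ _ (by positivity), Nat.div_eq_of_lt hlt]
    omega
  -- top-level quotients unchanged by f
  have htop : ∀ x, 1 ≤ x → x ≤ d ^ h →
      (f x - 1) / d ^ (p + 1) = (x - 1) / d ^ (p + 1) := by
    intro x hx1 hx2
    by_cases hiA : (x - 1) / m = A
    · obtain ⟨t, ht1, ht2, hxe, hfx⟩ := hfL x hx1 hiA
      have q1 := hqd (l - 1) (t - 1) (by omega) (by omega)
      have q2 := hqd (r - 1) (t - 1) (by omega) (by omega)
      rw [← hA'] at q1
      rw [← hB'] at q2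
      rw [show f x - 1 = B * m + (t - 1) from by omega,
          show x - 1 = A * m + (t - 1) from by omega, q1, q2]
    · by_cases hiB : (x - 1) / m = B
      · obtain ⟨t, ht1, ht2, hxe, hfx⟩ := hfR x hx1 hiB
        have q1 := hqd (l - 1) (t - 1) (by omega) (by omega)
        have q2 := hqd (r - 1) (t - 1) (by omega) (by omega)
        rw [← hA'] at q1
        rw [← hB'] at q2
        rw [show f x - 1 = A * m + (t - 1) from by omega,
            show x - 1 = B * m + (t - 1) from by omega, q1, q2]
      · rw [hfI x hx1 hx2 hiA hiB]
  have hktop : ∀ x, 1 ≤ x → x ≤ d ^ h → ∀ k, p + 1 ≤ k →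
      (f x - 1) / d ^ k = (x - 1) / d ^ k := by
    intro x hx1 hx2 k hk
    have h1 : (d : ℕ) ^ k = d ^ (p + 1) * d ^ (k - (p + 1)) := by
      rw [← pow_add]; congr 1; omega
    rw [h1, ← Nat.div_div_eq_div_mul, ← Nat.div_div_eq_div_mul, htop x hx1 hx2]
  -- f maps the interval to itself
  have hfmem : ∀ x ∈ Set.Icc 1 (d ^ h), f x ∈ Set.Icc 1 (d ^ h) := by
    intro x hx
    obtain ⟨hx1, hx2⟩ := hx
    by_cases hiA : (x - 1) / m = A
    · obtain ⟨t, ht1, ht2, hxe, hfx⟩ := hfL x hx1 hiA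
      have h1 : (B + 1) * m ≤ d ^ (e + 1) * m := Nat.mul_le_mul_right m hgd
      have h2 : (B + 1) * m = B * m + m := by ring
      exact ⟨by omega, by omega⟩
    · by_cases hiB : (x - 1) / m = B
      · obtain ⟨t, ht1, ht2, hxe, hfx⟩ := hfR x hx1 hiB
        have h1 : A * m ≤ B * m := Nat.mul_le_mul_right m (by omega)
        exact ⟨by omega, by omega⟩
      · rw [hfI x hx1 hx2 hiA hiB]; exact ⟨hx1, hx2⟩
  -- f is an involution on the interval
  have hinv : ∀ x ∈ Set.Icc 1 (d ^ h), f (f x) = x := by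
    intro x hx
    obtain ⟨hx1, hx2⟩ := hx
    by_cases hiA : (x - 1) / m = A
    · obtain ⟨t, ht1, ht2, hxe, hfx⟩ := hfL x hx1 hiA
      have hfxB : (f x - 1) / m = B :=
        (hmem B (f x) (by omega)).mpr ⟨t, ht1, ht2, by omega⟩
      obtain ⟨t', h1, h2, h3, h4⟩ := hfR (f x) (by omega) hfxB
      omega
    · by_cases hiB : (x - 1) / m = B
      · obtain ⟨t, ht1, ht2, hxe, hfx⟩ := hfR x hx1 hiB
        have hfxA : (f x - 1) / m = A :=
          (hmem A (f x) (by omega)).mpr ⟨t, ht1, ht2, by omega⟩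
        obtain ⟨t', h1, h2, h3, h4⟩ := hfL (f x) (by omega) hfxA
        omega
      · have h0 := hfI x hx1 hx2 hiA hiB
        rw [h0, h0]
  -- quotient equalities are preserved by f
  have hS : ∀ i ∈ Set.Icc 1 (d ^ h), ∀ j ∈ Set.Icc 1 (d ^ h), ∀ k, k ≤ h →
      (i - 1) / d ^ k = (j - 1) / d ^ k →
      (f i - 1) / d ^ k = (f j - 1) / d ^ k := by
    intro i hi j hj k hk2 hq
    obtain ⟨hi1, hi2⟩ := hi
    obtain ⟨hj1, hj2⟩ := hj
    rcases le_or_gt k p with hkp | hkp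
    · have hmq : (i - 1) / m = (j - 1) / m := hdivlift _ _ k hkp hq
      by_cases hiA : (i - 1) / m = A
      · obtain ⟨t, ht1, ht2, hie, hfi⟩ := hfL i hi1 hiA
        obtain ⟨u, hu1, hu2, hje, hfj⟩ := hfL j hj1 (by omega)
        have e1 : f i - 1 = (i - 1) + (r - l) * m := by omega
        have e2 : f j - 1 = (j - 1) + (r - l) * m := by omega
        rw [e1, e2, hshift _ k hkp, hshift _ k hkp, hq]
      · by_cases hiB : (i - 1) / m = B
        · obtain ⟨t, ht1, ht2, hie, hfi⟩ := hfR i hi1 hiB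
          obtain ⟨u, hu1, hu2, hje, hfj⟩ := hfR j hj1 (by omega)
          have e1 : i - 1 = (f i - 1) + (r - l) * m := by omega
          have e2 : j - 1 = (f j - 1) + (r - l) * m := by omega
          rw [e1, e2, hshift _ k hkp, hshift _ k hkp] at hq
          omega
        · rw [hfI i hi1 hi2 hiA hiB, hfI j hj1 hj2 (by omega) (by omega), hq]
    · rw [hktop i hi1 hi2 k hkp, hktop j hj1 hj2 k hkp, hq]
  -- assemble
  have hInvOn : Set.InvOn f f (Set.Icc 1 (d ^ h)) (Set.Icc 1 (d ^ h)) :=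
    ⟨hinv, hinv⟩
  refine ⟨hInvOn.bijOn hfmem hfmem, ?_⟩
  intro i hi j hj
  by_cases hij : i = j
  · rw [hij]; simp [leafDist]
  · have hfij : f i ≠ f j := fun hcon => hij (by rw [← hinv i hi, ← hinv j hj, hcon])
    simp only [leafDist, if_neg hij, if_neg hfij]
    congr 2
    ext k
    simp only [Set.mem_setOf_eq]
    constructor
    · rintro ⟨hk1, hk2, hq⟩
      refine ⟨hk1, hk2, ?_⟩
      have := hS (f i) (hfmem i hi) (f j) (hfmem j hj) k hk2 hq
      rwa [hinv i hi, hinv j hj] at this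
    · rintro ⟨hk1, hk2, hq⟩
      exact ⟨hk1, hk2, hS i hi j hj k hk2 hq⟩
end

section
/- Let d ≥ 2 and h ≥ 1 be natural numbers and let e, g, l, r be natural numbers with 0 ≤ e < h, 1 ≤ g ≤ d^e, and 1 ≤ l < r ≤ d. Let f: {1,…,d^h} → {1,…,d^h} be the flip with parameters (e, g, l, r), defined by: f(i) = Δ + (r−1)·d^{h−(e+1)} + t if i = Δ + (l−1)·d^{h−(e+1)} + t for some 1 ≤ t ≤ d^{h−(e+1)}; f(i) = Δ + (l−1)·d^{h−(e+1)} + t if i = Δ + (r−1)·d^{h−(e+1)} + t for some 1 ≤ t ≤ d^{h−(e+1)}; and f(i) = i otherwise, where Δ = (g−1)·d^{h−e}. Then for every finite simple graph G with at most d^h vertices and every arrangement φ (injective map from the vertex set of G into {1,…,d^h}), the flipped arrangement φ_f = f ∘ φ satisfies OV(G, d, φ_f) = OV(G, d, φ). -/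
private lemma flipDivHelper {N : ℕ} (hN : 0 < N) {c t x : ℕ} (ht : t < N)
    (hx : x = c * N + t) : x / N = c := by
  subst hx
  rw [mul_comm, Nat.mul_add_div hN, Nat.div_eq_of_lt ht, add_zero]

private lemma flip_key (d h e g l r : ℕ) (f : ℕ → ℕ) (hd : 2 ≤ d) (he : e < h)
    (hg1 : 1 ≤ g) (hg2 : g ≤ d ^ e) (hl : 1 ≤ l) (hlr : l < r) (hr : r ≤ d)
    (hfl : ∀ t, 1 ≤ t → t ≤ d ^ (h - (e + 1)) →
      f ((g - 1) * d ^ (h - e) + (l - 1) * d ^ (h - (e + 1)) + t)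
        = (g - 1) * d ^ (h - e) + (r - 1) * d ^ (h - (e + 1)) + t)
    (hfr : ∀ t, 1 ≤ t → t ≤ d ^ (h - (e + 1)) →
      f ((g - 1) * d ^ (h - e) + (r - 1) * d ^ (h - (e + 1)) + t)
        = (g - 1) * d ^ (h - e) + (l - 1) * d ^ (h - (e + 1)) + t)
    (hfid : ∀ i, 1 ≤ i → i ≤ d ^ h →
      (¬ ∃ t, 1 ≤ t ∧ t ≤ d ^ (h - (e + 1)) ∧
        (i = (g - 1) * d ^ (h - e) + (l - 1) * d ^ (h - (e + 1)) + t ∨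
         i = (g - 1) * d ^ (h - e) + (r - 1) * d ^ (h - (e + 1)) + t)) →
      f i = i) :
    ∀ a b, 1 ≤ a → a ≤ d ^ h → 1 ≤ b → b ≤ d ^ h →
      leafDist d h (f a) (f b) = leafDist d h a b := by
  obtain ⟨g', rfl⟩ : ∃ g', g = g' + 1 := ⟨g - 1, by omega⟩
  obtain ⟨l', rfl⟩ : ∃ l', l = l' + 1 := ⟨l - 1, by omega⟩
  obtain ⟨r', rfl⟩ : ∃ r', r = r' + 1 := ⟨r - 1, by omega⟩
  simp only [Nat.add_sub_cancel] at hfl hfr hfid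
  obtain ⟨s, hs1, rfl⟩ : ∃ s, 1 ≤ s ∧ r' = l' + s := ⟨r' - l', by omega, by omega⟩
  set M := d ^ (h - e) with hMdef
  set N := d ^ (h - (e + 1)) with hNdef
  set Δ := g' * M with hΔdef
  set A := l' * N with hAdef
  set B := s * N with hBdef
  have hAB : (l' + s) * N = A + B := by rw [add_mul, hAdef, hBdef]
  rw [hAB] at hfl hfr hfid
  have h0N : 0 < N := by rw [hNdef]; exact pow_pos (by omega) _
  have hMpos : 0 < M := by rw [hMdef]; exact pow_pos (by omega) _
  have hMN : M = N * d := by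
    have hh : h - e = (h - (e + 1)) + 1 := by omega
    rw [hMdef, hNdef, hh, pow_succ]
  have htop : Δ + M ≤ d ^ h := by
    have hexp : e + (h - e) = h := by omega
    calc Δ + M = (g' + 1) * M := by rw [hΔdef]; ring
      _ ≤ d ^ e * M := Nat.mul_le_mul_right M hg2
      _ = d ^ h := by rw [hMdef, ← pow_add, hexp]
  have hABN : A + B + N ≤ M := by
    calc A + B + N = (l' + s + 1) * N := by rw [hAdef, hBdef]; ring
      _ ≤ d * N := Nat.mul_le_mul_right N (by omega)
      _ = M := by rw [hMN, mul_comm]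
  have hBN : N ≤ B := by
    calc N = 1 * N := (one_mul N).symm
      _ ≤ s * N := Nat.mul_le_mul_right N hs1
  have hDA : Δ + A = (g' * d + l') * N := by rw [hΔdef, hAdef, hMN]; ring
  have hDAB : Δ + (A + B) = (g' * d + l' + s) * N := by
    rw [hΔdef, hAdef, hBdef, hMN]; ring
  have hmemL : ∀ a, 1 ≤ a →
      ((∃ t, 1 ≤ t ∧ t ≤ N ∧ a = Δ + A + t) ↔ (Δ + A + 1 ≤ a ∧ a ≤ Δ + A + N)) := by
    intro a ha
    constructor
    · rintro ⟨t, h1, h2, rfl⟩; omega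
    · rintro ⟨h1, h2⟩; exact ⟨a - (Δ + A), by omega, by omega, by omega⟩
  have hmemR : ∀ a, 1 ≤ a →
      ((∃ t, 1 ≤ t ∧ t ≤ N ∧ a = Δ + (A + B) + t) ↔
        (Δ + (A + B) + 1 ≤ a ∧ a ≤ Δ + (A + B) + N)) := by
    intro a ha
    constructor
    · rintro ⟨t, h1, h2, rfl⟩; omega
    · rintro ⟨h1, h2⟩; exact ⟨a - (Δ + (A + B)), by omega, by omega, by omega⟩
  have hfloorL : ∀ a, 1 ≤ a →
      ((Δ + A + 1 ≤ a ∧ a ≤ Δ + A + N) ↔ (a - 1) / N = g' * d + l') := by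
    intro a ha
    constructor
    · rintro ⟨h1, h2⟩
      exact flipDivHelper h0N (t := a - 1 - (Δ + A)) (by omega) (by rw [← hDA]; omega)
    · intro hfl'
      have h1 : (g' * d + l') * N ≤ a - 1 := by
        rw [← hfl']; exact Nat.div_mul_le_self _ _
      have h2 : a - 1 < ((a - 1) / N + 1) * N :=
        (Nat.div_lt_iff_lt_mul h0N).1 (Nat.lt_succ_self _)
      rw [hfl', add_mul, one_mul, ← hDA] at h2
      rw [← hDA] at h1
      omega
  have hfloorR : ∀ a, 1 ≤ a →
      ((Δ + (A + B) + 1 ≤ a ∧ a ≤ Δ + (A + B) + N) ↔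
        (a - 1) / N = g' * d + l' + s) := by
    intro a ha
    constructor
    · rintro ⟨h1, h2⟩
      exact flipDivHelper h0N (t := a - 1 - (Δ + (A + B))) (by omega) (by rw [← hDAB]; omega)
    · intro hfl'
      have h1 : (g' * d + l' + s) * N ≤ a - 1 := by
        rw [← hfl']; exact Nat.div_mul_le_self _ _
      have h2 : a - 1 < ((a - 1) / N + 1) * N :=
        (Nat.div_lt_iff_lt_mul h0N).1 (Nat.lt_succ_self _)
      rw [hfl', add_mul, one_mul, ← hDAB] at h2
      rw [← hDAB] at h1
      omega
  have hinv : ∀ a, 1 ≤ a → a ≤ d ^ h → f (f a) = a ∧ 1 ≤ f a ∧ f a ≤ d ^ h := by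
    intro a ha1 ha2
    by_cases hLa : ∃ t, 1 ≤ t ∧ t ≤ N ∧ a = Δ + A + t
    · obtain ⟨t, ht1, ht2, rfl⟩ := hLa
      rw [hfl t ht1 ht2, hfr t ht1 ht2]
      exact ⟨rfl, by omega, by omega⟩
    · by_cases hRa : ∃ t, 1 ≤ t ∧ t ≤ N ∧ a = Δ + (A + B) + t
      · obtain ⟨t, ht1, ht2, rfl⟩ := hRa
        rw [hfr t ht1 ht2, hfl t ht1 ht2]
        exact ⟨rfl, by omega, by omega⟩
      · have hid : f a = a := by
          apply hfid a ha1 ha2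
          rintro ⟨t, h1, h2, h3 | h3⟩
          · exact hLa ⟨t, h1, h2, h3⟩
          · exact hRa ⟨t, h1, h2, h3⟩
        rw [hid, hid]
        exact ⟨rfl, ha1, ha2⟩
  have hpres : ∀ a b k, 1 ≤ a → a ≤ d ^ h → 1 ≤ b → b ≤ d ^ h → 1 ≤ k → k ≤ h →
      (a - 1) / d ^ k = (b - 1) / d ^ k →
      (f a - 1) / d ^ k = (f b - 1) / d ^ k := by
    intro a b k ha1 ha2 hb1 hb2 hk1 hk2 hdiv
    have hdk : 0 < d ^ k := pow_pos (by omega) _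
    by_cases hkm : k ≤ h - (e + 1)
    · -- low k
      have hNk : N = d ^ k * d ^ (h - (e + 1) - k) := by
        rw [hNdef, ← pow_add]
        congr 1
        omega
      have hdivN : (a - 1) / N = (b - 1) / N := by
        rw [hNk, ← Nat.div_div_eq_div_mul, ← Nat.div_div_eq_div_mul, hdiv]
      have hBk : B = s * d ^ (h - (e + 1) - k) * d ^ k := by
        rw [hBdef, hNk]; ring
      by_cases hLa : (a - 1) / N = g' * d + l'
      · have hLb : (b - 1) / N = g' * d + l' := by rw [← hdivN]; exact hLa
        obtain ⟨ta, hta1, hta2, ha_eq⟩ := (hmemL a ha1).2 ((hfloorL a ha1).2 hLa)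
        obtain ⟨tb, htb1, htb2, hb_eq⟩ := (hmemL b hb1).2 ((hfloorL b hb1).2 hLb)
        have hfa_eq := hfl ta hta1 hta2
        rw [← ha_eq] at hfa_eq
        have hfb_eq := hfl tb htb1 htb2
        rw [← hb_eq] at hfb_eq
        have e1 : f a - 1 = (a - 1) + B := by omega
        have e2 : f b - 1 = (b - 1) + B := by omega
        rw [e1, e2, hBk, Nat.add_mul_div_right _ _ hdk, Nat.add_mul_div_right _ _ hdk,
          hdiv]
      · by_cases hRa : (a - 1) / N = g' * d + l' + s
        · have hRb : (b - 1) / N = g' * d + l' + s := by rw [← hdivN]; exact hRa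
          obtain ⟨ta, hta1, hta2, ha_eq⟩ := (hmemR a ha1).2 ((hfloorR a ha1).2 hRa)
          obtain ⟨tb, htb1, htb2, hb_eq⟩ := (hmemR b hb1).2 ((hfloorR b hb1).2 hRb)
          have hfa_eq := hfr ta hta1 hta2
          rw [← ha_eq] at hfa_eq
          have hfb_eq := hfr tb htb1 htb2
          rw [← hb_eq] at hfb_eq
          have e1 : a - 1 = (f a - 1) + B := by omega
          have e2 : b - 1 = (f b - 1) + B := by omega
          rw [e1, e2, hBk, Nat.add_mul_div_right _ _ hdk,
            Nat.add_mul_div_right _ _ hdk] at hdiv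
          exact Nat.add_right_cancel hdiv
        · have hLb : ¬ (b - 1) / N = g' * d + l' := by
            rw [← hdivN]; exact hLa
          have hRb : ¬ (b - 1) / N = g' * d + l' + s := by
            rw [← hdivN]; exact hRa
          have hfa_eq : f a = a := by
            apply hfid a ha1 ha2
            rintro ⟨t, h1, h2, h3 | h3⟩
            · exact hLa ((hfloorL a ha1).1 ((hmemL a ha1).1 ⟨t, h1, h2, h3⟩))
            · exact hRa ((hfloorR a ha1).1 ((hmemR a ha1).1 ⟨t, h1, h2, h3⟩))
          have hfb_eq : f b = b := by
            apply hfid b hb1 hb2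
            rintro ⟨t, h1, h2, h3 | h3⟩
            · exact hLb ((hfloorL b hb1).1 ((hmemL b hb1).1 ⟨t, h1, h2, h3⟩))
            · exact hRb ((hfloorR b hb1).1 ((hmemR b hb1).1 ⟨t, h1, h2, h3⟩))
          rw [hfa_eq, hfb_eq]
          exact hdiv
    · -- high k
      have hke : h - e ≤ k := by omega
      have hkM : d ^ k = M * d ^ (k - (h - e)) := by
        rw [hMdef, ← pow_add]
        congr 1
        omega
      have hfix : ∀ x, 1 ≤ x → x ≤ d ^ h → (f x - 1) / d ^ k = (x - 1) / d ^ k := by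
        intro x hx1 hx2
        by_cases hLx : ∃ t, 1 ≤ t ∧ t ≤ N ∧ x = Δ + A + t
        · obtain ⟨t, ht1, ht2, rfl⟩ := hLx
          rw [hfl t ht1 ht2]
          have d1 : (Δ + A + t - 1) / M = g' :=
            flipDivHelper hMpos (t := A + t - 1) (by omega) (by rw [← hΔdef]; omega)
          have d2 : (Δ + (A + B) + t - 1) / M = g' :=
            flipDivHelper hMpos (t := A + B + t - 1) (by omega) (by rw [← hΔdef]; omega)
          rw [hkM, ← Nat.div_div_eq_div_mul, ← Nat.div_div_eq_div_mul, d1, d2]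
        · by_cases hRx : ∃ t, 1 ≤ t ∧ t ≤ N ∧ x = Δ + (A + B) + t
          · obtain ⟨t, ht1, ht2, rfl⟩ := hRx
            rw [hfr t ht1 ht2]
            have d1 : (Δ + (A + B) + t - 1) / M = g' :=
              flipDivHelper hMpos (t := A + B + t - 1) (by omega) (by rw [← hΔdef]; omega)
            have d2 : (Δ + A + t - 1) / M = g' :=
              flipDivHelper hMpos (t := A + t - 1) (by omega) (by rw [← hΔdef]; omega)
            rw [hkM, ← Nat.div_div_eq_div_mul, ← Nat.div_div_eq_div_mul, d1, d2]
          · have hid : f x = x := by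
              apply hfid x hx1 hx2
              rintro ⟨t, h1, h2, h3 | h3⟩
              · exact hLx ⟨t, h1, h2, h3⟩
              · exact hRx ⟨t, h1, h2, h3⟩
            rw [hid]
      rw [hfix a ha1 ha2, hfix b hb1 hb2]
      exact hdiv
  intro a b ha1 ha2 hb1 hb2
  by_cases hab : a = b
  · subst hab
    simp [leafDist]
  · have hne : f a ≠ f b := by
      intro hc
      apply hab
      have h1 := congrArg f hc
      rwa [(hinv a ha1 ha2).1, (hinv b hb1 hb2).1] at h1
    unfold leafDist
    rw [if_neg hne, if_neg hab]
    congr 2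
    ext k
    simp only [Set.mem_setOf_eq]
    constructor
    · rintro ⟨hk1, hk2, hk3⟩
      refine ⟨hk1, hk2, ?_⟩
      have h1 := hpres (f a) (f b) k (hinv a ha1 ha2).2.1 (hinv a ha1 ha2).2.2
        (hinv b hb1 hb2).2.1 (hinv b hb1 hb2).2.2 hk1 hk2 hk3
      rwa [(hinv a ha1 ha2).1, (hinv b hb1 hb2).1] at h1
    · rintro ⟨hk1, hk2, hk3⟩
      exact ⟨hk1, hk2, hpres a b k ha1 ha2 hb1 hb2 hk1 hk2 hk3⟩

/-- Proposition 4, the flip proposition: if `f` is the flip with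
parameters `(e,g,l,r)` (with `Δ = (g−1)·d^(h−e)`), then for every finite simple
graph `G` with at most `d^h` vertices and every injective arrangement
`φ : V(G) → {1,…,d^h}`, the flipped arrangement `f ∘ φ` has the same objective
value: `OV(G,d,f∘φ) = OV(G,d,φ)`. -/
theorem flip_preserves_objective_value
    {V : Type*} [Fintype V] [DecidableEq V] (G : SimpleGraph V) [DecidableRel G.Adj]
    (d h e g l r : ℕ) (hd : 2 ≤ d) (he : e < h)
    (hg1 : 1 ≤ g) (hg2 : g ≤ d ^ e) (hl : 1 ≤ l) (hlr : l < r) (hr : r ≤ d)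
    (f : ℕ → ℕ)
    (hfl : ∀ t, 1 ≤ t → t ≤ d ^ (h - (e + 1)) →
      f ((g - 1) * d ^ (h - e) + (l - 1) * d ^ (h - (e + 1)) + t)
        = (g - 1) * d ^ (h - e) + (r - 1) * d ^ (h - (e + 1)) + t)
    (hfr : ∀ t, 1 ≤ t → t ≤ d ^ (h - (e + 1)) →
      f ((g - 1) * d ^ (h - e) + (r - 1) * d ^ (h - (e + 1)) + t)
        = (g - 1) * d ^ (h - e) + (l - 1) * d ^ (h - (e + 1)) + t)
    (hfid : ∀ i, 1 ≤ i → i ≤ d ^ h →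
      (¬ ∃ t, 1 ≤ t ∧ t ≤ d ^ (h - (e + 1)) ∧
        (i = (g - 1) * d ^ (h - e) + (l - 1) * d ^ (h - (e + 1)) + t ∨
         i = (g - 1) * d ^ (h - e) + (r - 1) * d ^ (h - (e + 1)) + t)) →
      f i = i)
    (hcard : Fintype.card V ≤ d ^ h)
    (φ : V → ℕ) (hinj : Function.Injective φ)
    (hrange : ∀ v, 1 ≤ φ v ∧ φ v ≤ d ^ h) :
    OV G d h (f ∘ φ) = OV G d h φ := by
  unfold OV
  refine Finset.sum_congr rfl fun x _ => ?_
  induction x using Sym2.ind with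
  | _ u v =>
    simp only [Sym2.lift_mk, Function.comp_apply]
    exact flip_key d h e g l r f hd he hg1 hg2 hl hlr hr hfl hfr hfid (φ u) (φ v)
      (hrange u).1 (hrange u).2 (hrange v).1 (hrange v).2
end

section
/- Let G be the 'extended star' graph on vertices {1, …, 12} with edge set {{1,2},{2,3},{1,4},{4,5},{5,6},{1,7},{7,8},{8,9},{1,10},{10,11},{11,12}}, and consider the data arrangement problem with d = 4, so h = ⌈log_4 12⌉ = 2 and the host tree has 16 leaves. Then: (i) there exists an injective arrangement φ: {1,…,12} → {1,…,16} with OV(G, 4, φ) = 28; and (ii) every contiguous arrangement ψ (an injective arrangement whose image is a set of 12 consecutive indices {i, i+1, …, i+11} for some 1 ≤ i ≤ 5) satisfies OV(G, 4, ψ) > 28. -/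
/-- The edges of the "extended star" graph of Example 3 of the paper; the paper's
vertex `k ∈ {1,…,12}` corresponds to `(k−1 : Fin 12)`, so the paper's edge set
`{1,2},{2,3},{1,4},{4,5},{5,6},{1,7},{7,8},{8,9},{1,10},{10,11},{11,12}` becomes
the following set of unordered pairs on `Fin 12`. -/
def extStarEdges : Finset (Sym2 (Fin 12)) :=
  {s(0, 1), s(1, 2), s(0, 3), s(3, 4), s(4, 5), s(0, 6), s(6, 7), s(7, 8),
   s(0, 9), s(9, 10), s(10, 11)}

/-- The "extended star" guest graph of Example 3 of the paper, on 12 vertices. -/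
def extStar : SimpleGraph (Fin 12) where
  Adj u v := s(u, v) ∈ extStarEdges
  symm := ⟨fun u v h => by
    show s(v, u) ∈ extStarEdges
    rwa [Sym2.eq_swap]⟩
  loopless := ⟨fun u => by
    show s(u, u) ∉ extStarEdges
    revert u
    decide⟩

instance : DecidableRel extStar.Adj :=
  fun u v => decidable_of_iff (s(u, v) ∈ extStarEdges) Iff.rfl

open Finset

lemma leafDist_height_two {d t j : ℕ} (hne : t ≠ j) (ht : t ≤ d ^ 2) (hj : j ≤ d ^ 2) :
    leafDist d 2 t j = if (t - 1) / d = (j - 1) / d then 2 else 4 := by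
  unfold leafDist
  rw [if_neg hne]
  set S := {k : ℕ | 1 ≤ k ∧ k ≤ 2 ∧ (t - 1) / d ^ k = (j - 1) / d ^ k}
  have h2 : 2 ∈ S := by
    refine ⟨by norm_num, le_rfl, ?_⟩
    rw [Nat.div_eq_zero_iff.mpr (by omega), Nat.div_eq_zero_iff.mpr (by omega)]
  obtain ⟨hpos, hle, hdiv⟩ := Nat.sInf_mem (⟨2, h2⟩ : S.Nonempty)
  split_ifs with h1
  · have := Nat.sInf_le (show 1 ∈ S from ⟨le_rfl, by norm_num, by simpa using h1⟩)
    omega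
  · have : sInf S ≠ 1 := fun hS => h1 (by simpa [hS] using hdiv)
    omega

def crossingEdges {V α : Type*} [Fintype V] [DecidableEq V] [DecidableEq α] (G : SimpleGraph V)
    [DecidableRel G.Adj] (f : V → α) : Finset (Sym2 V) :=
  {e ∈ G.edgeFinset | ¬(e.map f).IsDiag}

lemma crossingEdges_comp_subset {V α β : Type*} [Fintype V] [DecidableEq V] [DecidableEq α]
    [DecidableEq β] (G : SimpleGraph V) [DecidableRel G.Adj] (f : V → α) (k : α → β) :
    crossingEdges G (k ∘ f) ⊆ crossingEdges G f := by
  refine monotone_filter_right _ fun e _ => mt fun hdiag => ?_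
  rw [← Sym2.map_map]
  exact hdiag.map

lemma OV_height_two {V : Type*} [Fintype V] [DecidableEq V] (G : SimpleGraph V)
    [DecidableRel G.Adj] {d : ℕ} {φ : V → ℕ} (hφ : Function.Injective φ)
    (hle : ∀ v, φ v ≤ d ^ 2) :
    OV G d 2 φ = 2 * #G.edgeFinset + 2 * #(crossingEdges G fun v => (φ v - 1) / d) := by
  rw [OV, crossingEdges, card_filter, card_eq_sum_ones, mul_sum, mul_sum, ← sum_add_distrib]
  refine sum_congr rfl fun e he => ?_
  induction e using Sym2.ind with
  | _ u v =>
    have huv : φ u ≠ φ v := hφ.ne (G.ne_of_adj (SimpleGraph.mem_edgeFinset.mp he))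
    simp only [Sym2.lift_mk, Sym2.map_mk, Sym2.mk_isDiag_iff,
      leafDist_height_two huv (hle u) (hle v)]
    split_ifs <;> rfl

def adjChanges {α : Type*} [DecidableEq α] : List α → ℕ
  | a :: b :: l => (if a = b then 0 else 1) + adjChanges (b :: l)
  | _ => 0

lemma card_toFinset_erase_le_adjChanges {α : Type*} [DecidableEq α] (a : α) (l : List α) :
    #(l.toFinset.erase a) ≤ adjChanges (a :: l) := by
  induction l generalizing a with
  | nil => simp
  | cons b l ih =>
    rw [adjChanges, List.toFinset_cons]
    split_ifs with hab
    · subst hab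
      simpa using ih a
    · calc #((insert b l.toFinset).erase a)
          ≤ #(insert b (l.toFinset.erase b)) := card_le_card fun x hx => by
            rw [mem_erase, mem_insert] at hx
            rw [mem_insert, mem_erase]
            tauto
        _ ≤ #(l.toFinset.erase b) + 1 := card_insert_le _ _
        _ ≤ 1 + adjChanges (b :: l) := by linarith [ih b]

def extStarLegs : Fin 4 → List (Fin 12) :=
  ![[1, 2], [3, 4, 5], [6, 7, 8], [9, 10, 11]]

section extStar

variable {α : Type*} [DecidableEq α] (c : Fin 12 → α)

lemma card_crossingEdges_extStar :
    #(crossingEdges extStar c) = ∑ i, adjChanges ((0 :: extStarLegs i).map c) := by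
  rw [crossingEdges, show extStar.edgeFinset = extStarEdges by decide, card_filter, extStarEdges]
  simp (disch := decide) only [sum_insert, sum_singleton, Sym2.map_mk, Sym2.mk_isDiag_iff,
    ite_not, Fin.sum_univ_four, extStarLegs, List.map_cons, List.map_nil, adjChanges,
    Matrix.cons_val, add_zero]
  ring

lemma two_le_card_extStarLegs_mem {t : α} (ht : c 0 ≠ t) (h4 : 4 ≤ #{v | c v = t}) :
    2 ≤ #{i | t ∈ (extStarLegs i).map c} := by
  have hcover : ({v | c v = t} : Finset (Fin 12)) ⊆
      ({i | t ∈ (extStarLegs i).map c} : Finset (Fin 4)).biUnion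
        fun i => (extStarLegs i).toFinset := by
    intro v hv
    rw [mem_filter_univ] at hv
    have hv0 : v ≠ 0 := by rintro rfl; exact ht hv
    obtain ⟨i, hi⟩ := (by decide : ∀ v : Fin 12, v ≠ 0 → ∃ i, v ∈ extStarLegs i) v hv0
    simp only [mem_biUnion, mem_filter_univ, List.mem_map, List.mem_toFinset]
    exact ⟨i, ⟨v, hi, hv⟩, hi⟩
  have hshort : ∀ i, #(extStarLegs i).toFinset ≤ 3 := by decide
  have := (card_le_card hcover).trans
    (card_biUnion_le.trans (sum_le_card_nsmul _ _ 3 fun i _ => hshort i))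
  rw [smul_eq_mul] at this
  omega

lemma two_mul_card_le_card_crossingEdges_extStar (T : Finset α) (hT : c 0 ∉ T)
    (h4 : ∀ t ∈ T, 4 ≤ #{v | c v = t}) : 2 * #T ≤ #(crossingEdges extStar c) := by
  calc 2 * #T = ∑ t ∈ T, 2 := by rw [sum_const, smul_eq_mul, mul_comm]
    _ ≤ ∑ t ∈ T, #{i | t ∈ (extStarLegs i).map c} :=
      sum_le_sum fun t ht =>
        two_le_card_extStarLegs_mem c (ne_of_mem_of_not_mem ht hT).symm (h4 t ht)
    _ = ∑ i, #{t ∈ T | t ∈ (extStarLegs i).map c} := by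
      simp only [card_filter]
      exact sum_comm
    _ ≤ ∑ i, #(((extStarLegs i).map c).toFinset.erase (c 0)) :=
      sum_le_sum fun i _ => card_le_card fun t ht => by
        rw [mem_filter] at ht
        exact mem_erase.mpr ⟨ne_of_mem_of_not_mem ht.1 hT, List.mem_toFinset.mpr ht.2⟩
    _ ≤ ∑ i, adjChanges ((0 :: extStarLegs i).map c) :=
      sum_le_sum fun i _ => card_toFinset_erase_le_adjChanges _ _
    _ = #(crossingEdges extStar c) := (card_crossingEdges_extStar c).symm

end extStar

lemma image_eq_Icc_of_injective {ι : Type*} [Fintype ι] {ψ : ι → ℕ}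
    (hψ : Function.Injective ψ) {i k : ℕ} (hcard : Fintype.card ι = k + 1)
    (hrange : ∀ v, i ≤ ψ v ∧ ψ v ≤ i + k) :
    univ.image ψ = Icc i (i + k) := by
  refine eq_of_subset_of_card_le (fun j hj => ?_) ?_
  · obtain ⟨v, -, rfl⟩ := mem_image.mp hj
    exact mem_Icc.mpr (hrange v)
  · rw [card_image_of_injective _ hψ, Nat.card_Icc, card_univ, hcard]
    omega

lemma card_filter_comp_of_injective {ι β : Type*} [Fintype ι] [DecidableEq β] {ψ : ι → β}
    (hψ : Function.Injective ψ) (p : β → Prop) [DecidablePred p] :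
    #{v | p (ψ v)} = #{j ∈ univ.image ψ | p j} := by
  rw [filter_image, card_image_of_injective _ hψ]

lemma card_filter_Icc_block_mod_three {i t : ℕ} (hi1 : 1 ≤ i) (hi5 : i ≤ 5) (ht : t < 3) :
    #{j ∈ Icc i (i + 11) | (j - 1) / 4 % 3 = t} = 4 := by
  interval_cases i <;> interval_cases t <;> decide

/-- Example 3: for the extended star guest graph with `d = 4`,
`h = ⌈log_4 12⌉ = 2` and `4^2 = 16` leaves: (i) some injective arrangement
`φ : V → {1,…,16}` achieves objective value `28`; and (ii) every contiguous
arrangement `ψ` (an injective arrangement whose image is a set of `12`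
consecutive indices `{i,…,i+11}` with `1 ≤ i ≤ 5`) has objective value `> 28`. -/
theorem extended_star_no_contiguous_optimum :
    (∃ φ : Fin 12 → ℕ, Function.Injective φ ∧ (∀ v, 1 ≤ φ v ∧ φ v ≤ 16) ∧
      OV extStar 4 2 φ = 28) ∧
    (∀ ψ : Fin 12 → ℕ, Function.Injective ψ → (∀ v, 1 ≤ ψ v ∧ ψ v ≤ 16) →
      (∃ i, 1 ≤ i ∧ i ≤ 5 ∧ ∀ v, i ≤ ψ v ∧ ψ v ≤ i + 11) →
      28 < OV extStar 4 2 ψ) := by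
  have hedges : #extStar.edgeFinset = 11 := by decide
  refine ⟨⟨![1, 2, 3, 5, 6, 7, 9, 10, 11, 13, 14, 15], by decide, by decide, ?_⟩, ?_⟩
  · rw [OV_height_two extStar (by decide) (by decide), hedges]
    decide
  rintro ψ hψ hbound ⟨i, hi1, hi5, hrange⟩
  have himage := image_eq_Icc_of_injective hψ (Fintype.card_fin 12) hrange
  -- `% 3` identifies the two outer blocks 0 and 3
  set merged : Fin 12 → ℕ := fun v => (ψ v - 1) / 4 % 3
  have hclasses : ∀ t ∈ (range 3).erase (merged 0), 4 ≤ #{v | merged v = t} := by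
    intro t ht
    rw [card_filter_comp_of_injective hψ (fun j => (j - 1) / 4 % 3 = t), himage,
      card_filter_Icc_block_mod_three hi1 hi5 (mem_range.mp (mem_of_mem_erase ht))]
  have hcut :=
    (two_mul_card_le_card_crossingEdges_extStar merged _ (notMem_erase _ _) hclasses).trans
      (card_le_card (crossingEdges_comp_subset extStar (fun v => (ψ v - 1) / 4) (· % 3)))
  rw [card_erase_of_mem (mem_range.mpr (Nat.mod_lt _ (by norm_num))), card_range] at hcut
  rw [OV_height_two extStar hψ fun v => (hbound v).2, hedges]
  omega
end
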